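/- arXiv:2302.02434 — 5 statements merged into one kernel-verified Lean document; each statement's English description precedes it below -/
import Mathlib

section
/- For combinations σ ∈ Σ(k,n) and τ ∈ Σ(m,n), the operator s^{k,m} applied to the basis form dx^σ ⊗ dx^τ satisfies s^{k,m}(dx^σ ⊗ dx^τ) = Σ_{l=1}^{m} (−1)^{l−1} dx^{τ_l} ∧ dx^σ ⊗ dx^{τ_1} ∧ ⋯ ∧ (dx^{τ_l} omitted) ∧ ⋯ ∧ dx^{τ_m}. -/
/-- The basis alternating `k`-form `dx^σ = dx^{σ 0} ∧ ⋯ ∧ dx^{σ (k-1)}` on `ℝ^n`,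
evaluated on vectors `v : Fin k → (Fin n → ℝ)` as the determinant of the matrix of
selected components. -/
noncomputable def dxForm {n k : ℕ} (σ : Fin k → Fin n) (v : Fin k → (Fin n → ℝ)) : ℝ :=
  Matrix.det (Matrix.of fun i j => v i (σ j))

/-- The algebraic linking operator `s^{k,m} : Alt^{k,m} → Alt^{k+1,m-1}` of the BGG
construction, defined on (not necessarily alternating) double multilinear maps by
`s μ (v_0,…,v_k)(w_1,…,w_{m-1}) = Σ_l (-1)^l μ(v_0,…,v̂_l,…,v_k)(v_l,w_1,…,w_{m-1})`. -/
noncomputable def sOp {E : Type*} {k m : ℕ}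
    (F : (Fin k → E) → (Fin (m + 1) → E) → ℝ) :
    (Fin (k + 1) → E) → (Fin m → E) → ℝ :=
  fun v w => ∑ l : Fin (k + 1), (-1 : ℝ) ^ (l : ℕ) * F (v ∘ l.succAbove) (Fin.cons (v l) w)

/-! Expanding `dx^τ (v_i, w)` along its first row and `dx^{τ_l} ∧ dx^σ` along its first column
turns both sides into the same double sum over `i` and `l`. -/

lemma dxForm_cons_eq_sum {n k : ℕ} (σ : Fin k → Fin n) (t : Fin n)
    (v : Fin (k + 1) → (Fin n → ℝ)) :
    dxForm (Fin.cons t σ) v =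
      ∑ i : Fin (k + 1), (-1 : ℝ) ^ (i : ℕ) * v i t * dxForm σ (v ∘ i.succAbove) := by
  simp only [dxForm, Matrix.det_succ_column_zero, Matrix.submatrix, Matrix.of_apply,
    Fin.cons_zero, Fin.cons_succ, Function.comp]

lemma dxForm_apply_cons_eq_sum {n m : ℕ} (τ : Fin (m + 1) → Fin n) (x : Fin n → ℝ)
    (w : Fin m → (Fin n → ℝ)) :
    dxForm τ (Fin.cons x w) =
      ∑ j : Fin (m + 1), (-1 : ℝ) ^ (j : ℕ) * x (τ j) * dxForm (τ ∘ j.succAbove) w := by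
  simp only [dxForm, Matrix.det_succ_row_zero, Matrix.submatrix, Matrix.of_apply,
    Fin.cons_zero, Fin.cons_succ, Function.comp]

theorem s_on_basis_forms_general {n k m : ℕ} (σ : Fin k → Fin n) (τ : Fin (m + 1) → Fin n)
    (v : Fin (k + 1) → (Fin n → ℝ)) (w : Fin m → (Fin n → ℝ)) :
    sOp (fun a b => dxForm σ a * dxForm τ b) v w =
      ∑ l : Fin (m + 1), (-1 : ℝ) ^ (l : ℕ) *
        (dxForm (Fin.cons (τ l) σ) v * dxForm (τ ∘ l.succAbove) w) := by
  simp only [sOp, dxForm_apply_cons_eq_sum, dxForm_cons_eq_sum, Finset.mul_sum, Finset.sum_mul]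
  rw [Finset.sum_comm]
  refine Finset.sum_congr rfl fun l _ => Finset.sum_congr rfl fun i _ => ?_
  ring

/-- for combinations `σ ∈ Σ(k,n)` and `τ ∈ Σ(m,n)` (strictly increasing
tuples), `s^{k,m}(dx^σ ⊗ dx^τ) = Σ_{l=1}^{m} (−1)^{l−1} dx^{τ_l} ∧ dx^σ ⊗
dx^{τ_1} ∧ ⋯ ∧ (dx^{τ_l} omitted) ∧ ⋯ ∧ dx^{τ_m}`. -/
theorem s_on_basis_forms {n k m : ℕ} (σ : Fin k → Fin n) (τ : Fin (m + 1) → Fin n)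
    (hσ : StrictMono σ) (hτ : StrictMono τ)
    (v : Fin (k + 1) → (Fin n → ℝ)) (w : Fin m → (Fin n → ℝ)) :
    sOp (fun a b => dxForm σ a * dxForm τ b) v w =
      ∑ l : Fin (m + 1), (-1 : ℝ) ^ (l : ℕ) *
        (dxForm (Fin.cons (τ l) σ) v * dxForm (τ ∘ l.succAbove) w) :=
  s_on_basis_forms_general σ τ v w
end

section
/- For each j, the operator s^{i,j} : Alt^{i,j}(ℝ^n) → Alt^{i+1,j−1}(ℝ^n) satisfies the anticommutativity relation with the exterior derivative components: if D and D̃ denote the exterior derivative tensored with the identity on the value spaces, then D ∘ S = −S ∘ D̃ on smooth Alt^{i,j}-valued fields, where S = I ⊗ s^{i,j}. -/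
/-- The exterior derivative on `Alt^j`-valued differential `i`-forms, acting on the
(first, form) part: `dF(x)(v_0,…,v_i)(w) = Σ_l (-1)^l ∂_{v_l} [y ↦ F(y)(v_0,…,v̂_l,…,v_i)(w)](x)`. -/
noncomputable def extDer {E : Type*} [NormedAddCommGroup E] [NormedSpace ℝ E]
    {i m : ℕ} (F : E → (Fin i → E) → (Fin m → E) → ℝ) :
    E → (Fin (i + 1) → E) → (Fin m → E) → ℝ :=
  fun x v w => ∑ l : Fin (i + 1),
    (-1 : ℝ) ^ (l : ℕ) * fderiv ℝ (fun y => F y (v ∘ l.succAbove) w) x (v l)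

/-- Value of `succAbove` as a natural number. -/
lemma sa_val {n : ℕ} (p : Fin (n+1)) (j : Fin n) :
    ((p.succAbove j : Fin (n+1)) : ℕ) = if (j : ℕ) < (p : ℕ) then (j : ℕ) else (j : ℕ) + 1 := by
  rw [Fin.succAbove]
  split_ifs with h1 h2 h3 <;> simp_all [Fin.lt_def]

/-- The sign-reversing involution on index pairs. -/
def tw {n : ℕ} (p : Fin (n+2) × Fin (n+1)) : Fin (n+2) × Fin (n+1) :=
  if h : (p.2 : ℕ) < (p.1 : ℕ) then
    (⟨(p.2 : ℕ), by have := p.2.2; omega⟩, ⟨(p.1 : ℕ) - 1, by have := p.1.2; omega⟩)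
  else
    (⟨(p.2 : ℕ) + 1, by have := p.2.2; omega⟩, ⟨(p.1 : ℕ), by have := p.2.2; omega⟩)

lemma tw_val1 {n : ℕ} (p : Fin (n+2) × Fin (n+1)) :
    ((tw p).1 : ℕ) = if (p.2 : ℕ) < (p.1 : ℕ) then (p.2 : ℕ) else (p.2 : ℕ) + 1 := by
  simp only [tw]; split_ifs <;> rfl

lemma tw_val2 {n : ℕ} (p : Fin (n+2) × Fin (n+1)) :
    ((tw p).2 : ℕ) = if (p.2 : ℕ) < (p.1 : ℕ) then (p.1 : ℕ) - 1 else (p.1 : ℕ) := by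
  simp only [tw]; split_ifs <;> rfl

lemma tw_tw {n : ℕ} (p : Fin (n+2) × Fin (n+1)) : tw (tw p) = p := by
  have h1 := tw_val1 (tw p); have h2 := tw_val2 (tw p)
  have h3 := tw_val1 p; have h4 := tw_val2 p
  rw [Prod.ext_iff, Fin.ext_iff, Fin.ext_iff]
  constructor <;> [rw [h1]; rw [h2]] <;> rw [h3, h4] <;>
    have := p.1.2 <;> split_ifs <;> omega

lemma neg_one_pow_odd_sum (s t : ℕ) (h : (s + t) % 2 = 1) : (-1:ℝ)^s = -(-1:ℝ)^t := by
  rcases Nat.even_or_odd s with hs | hs <;> rcases Nat.even_or_odd t with ht | ht <;>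
    first
    | (exfalso; rcases hs with ⟨a, ha⟩ <;> rcases ht with ⟨b, hb⟩ <;> omega)
    | simp [hs.neg_one_pow, ht.neg_one_pow]

lemma tw_sign {n : ℕ} (p : Fin (n+2) × Fin (n+1)) :
    ((-1:ℝ) ^ ((tw p).1 : ℕ)) * ((-1:ℝ) ^ ((tw p).2 : ℕ))
      = -(((-1:ℝ) ^ (p.1 : ℕ)) * ((-1:ℝ) ^ (p.2 : ℕ))) := by
  rw [← pow_add, ← pow_add, neg_one_pow_odd_sum]
  have h1 := tw_val1 p; have h2 := tw_val2 p
  split_ifs at h1 h2 <;> omega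

lemma tw_fst {n : ℕ} (p : Fin (n+2) × Fin (n+1)) : (tw p).1 = p.1.succAbove p.2 := by
  apply Fin.ext
  rw [tw_val1, sa_val]

lemma tw_snd {n : ℕ} (p : Fin (n+2) × Fin (n+1)) : (tw p).1.succAbove (tw p).2 = p.1 := by
  apply Fin.ext
  rw [sa_val, tw_val1, tw_val2]
  split_ifs <;> omega

lemma tw_comp {n : ℕ} (p : Fin (n+2) × Fin (n+1)) (j : Fin n) :
    (tw p).1.succAbove ((tw p).2.succAbove j) = p.1.succAbove (p.2.succAbove j) := by
  apply Fin.ext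
  simp only [sa_val, tw_val1, tw_val2]
  split_ifs <;> omega

/-- with `D`, `D̃` the exterior derivatives tensored with the identity on the
value spaces and `S = I ⊗ s^{i,j}`, one has `D ∘ S = − S ∘ D̃` on smooth
`Alt^{i,j}`-valued fields. -/
theorem extDer_sOp_anticomm {n i m : ℕ}
    (F : (Fin n → ℝ) → (Fin i → (Fin n → ℝ)) → (Fin (m + 1) → (Fin n → ℝ)) → ℝ)
    (hF : ∀ v w, ContDiff ℝ (⊤ : ℕ∞) (fun x => F x v w))
    (x : Fin n → ℝ) (v : Fin (i + 2) → (Fin n → ℝ)) (w : Fin m → (Fin n → ℝ)) :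
    extDer (fun y => sOp (F y)) x v w = - sOp (extDer F x) v w := by
  classical
  have hd : ∀ (vv : Fin i → (Fin n → ℝ)) (ww : Fin (m+1) → (Fin n → ℝ)),
      DifferentiableAt ℝ (fun y => F y vv ww) x :=
    fun vv ww => ((hF vv ww).differentiable (by simp)).differentiableAt
  set A : Fin (i+2) × Fin (i+1) → ℝ := fun p =>
    (-1:ℝ) ^ (p.1 : ℕ) * ((-1:ℝ) ^ (p.2 : ℕ) *
      fderiv ℝ (fun y => F y (v ∘ p.1.succAbove ∘ p.2.succAbove)
        (Fin.cons (v (p.1.succAbove p.2)) w)) x (v p.1)) with hA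
  set B : Fin (i+2) × Fin (i+1) → ℝ := fun p =>
    (-1:ℝ) ^ (p.1 : ℕ) * ((-1:ℝ) ^ (p.2 : ℕ) *
      fderiv ℝ (fun y => F y (v ∘ p.1.succAbove ∘ p.2.succAbove)
        (Fin.cons (v p.1) w)) x (v (p.1.succAbove p.2))) with hB
  have hLHS : extDer (fun y => sOp (F y)) x v w = ∑ p : Fin (i+2) × Fin (i+1), A p := by
    rw [Fintype.sum_prod_type]
    simp only [extDer, sOp]
    refine Finset.sum_congr rfl (fun l _ => ?_)
    rw [fderiv_fun_sum (u := Finset.univ) (fun k _ => ((hd _ _).const_mul _))]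
    rw [ContinuousLinearMap.sum_apply, Finset.mul_sum]
    refine Finset.sum_congr rfl (fun k _ => ?_)
    rw [fderiv_const_mul (hd _ _), ContinuousLinearMap.smul_apply, smul_eq_mul]
    rfl
  have hRHS : sOp (extDer F x) v w = ∑ p : Fin (i+2) × Fin (i+1), B p := by
    rw [Fintype.sum_prod_type]
    simp only [extDer, sOp, Finset.mul_sum]
    rfl
  have key : ∀ p, A p = - B (tw p) := by
    intro p
    have hcomp : (v ∘ (tw p).1.succAbove ∘ (tw p).2.succAbove)
        = v ∘ p.1.succAbove ∘ p.2.succAbove := by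
      funext j
      simp only [Function.comp_apply, tw_comp]
    rw [hA, hB]
    dsimp only
    rw [hcomp, tw_snd, tw_fst]
    have hs := tw_sign p
    rw [tw_fst p] at hs
    set D := fderiv ℝ (fun y => F y (v ∘ p.1.succAbove ∘ p.2.succAbove)
      (Fin.cons (v (p.1.succAbove p.2)) w)) x (v p.1)
    linear_combination D * hs
  rw [hLHS, hRHS]
  calc ∑ p, A p = ∑ p, - B (tw p) := Finset.sum_congr rfl (fun p _ => key p)
    _ = - ∑ p, B (tw p) := by rw [Finset.sum_neg_distrib]
    _ = - ∑ p, B p := by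
        congr 1
        exact Equiv.sum_comp (Function.Involutive.toPerm tw tw_tw) B
end

section
/- Let Z• and Z̃• be cochain complexes of vector spaces with differentials D and D̃, connected by linear maps S^j : Z̃^j → Z^{j+1} satisfying D^{j+1}S^j = −S^{j+1}D̃^j. Suppose there is an index J with S^J bijective, S^j injective for j ≤ J and surjective for j ≥ J. Define the BGG complex (Υ•, 𝒟•) by Υ^0 = Z^0, Υ^j = ran(S^{j−1})^⊥ ⊂ Z^j for 1 ≤ j ≤ J, Υ^j = ker(S^j) ⊂ Z̃^j for J < j ≤ n, with 𝒟^j = P_{ran(S^j)^⊥} D^j for j < J, 𝒟^J = D̃^J (S^J)^{-1} D^J, and 𝒟^j = D̃^j for j > J. Then (Υ•, 𝒟•) is a cochain complex, i.e., 𝒟^{j+1} ∘ 𝒟^j = 0 for all j. -/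
/-!
Below `J` everything rests on the anticommutation relation. Write `P` for the projection onto
`ran(S^j)ᗮ` and `P D^j u = D^j u - S^j v`; then `D^{j+1} P D^j u = -D^{j+1} S^j v = S^{j+1} D̃^j v`
lies in `ran S^{j+1}`. So it is annihilated by the next projection, and for `j + 1 = J` the left
inverse of `S^J` turns it into `D̃^j v`, which `D̃^J` kills. From `J` on, the second operator is
`D̃`, and `D̃ ∘ D̃ = 0`.
-/

section BGG

variable (Z Z' : ℕ → Type*)
variable [∀ j, NormedAddCommGroup (Z j)] [∀ j, InnerProductSpace ℝ (Z j)]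
  [∀ j, FiniteDimensional ℝ (Z j)]
variable [∀ j, NormedAddCommGroup (Z' j)] [∀ j, InnerProductSpace ℝ (Z' j)]
  [∀ j, FiniteDimensional ℝ (Z' j)]
variable (D : ∀ j, Z j →ₗ[ℝ] Z (j + 1)) (D' : ∀ j, Z' j →ₗ[ℝ] Z' (j + 1))
variable (S : ∀ j, Z' j →ₗ[ℝ] Z (j + 1)) (J : ℕ) (Sinv : Z (J + 1) →ₗ[ℝ] Z' J)

/-- The orthogonal projection of `Z^{j+1}` onto `ran(S^j)ᗮ`, as an endomorphism. -/
noncomputable def projRanPerp (j : ℕ) : Z (j + 1) →ₗ[ℝ] Z (j + 1) :=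
  (LinearMap.range (S j))ᗮ.subtype ∘ₗ
    (Submodule.orthogonalProjectionOnto (LinearMap.range (S j))ᗮ).toLinearMap

/-- The spaces `Υ^j` of the BGG complex, realized inside `Z^j × Z̃^j`:
`Υ^0 = Z^0`, `Υ^j = ran(S^{j−1})ᗮ ⊆ Z^j` for `1 ≤ j ≤ J`, and
`Υ^j = ker(S^j) ⊆ Z̃^j` for `j > J`. -/
noncomputable def BGGspace : ∀ j : ℕ, Submodule ℝ (Z j × Z' j)
  | 0 => (⊤ : Submodule ℝ (Z 0)).prod ⊥
  | (i + 1) =>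
      if i + 1 ≤ J then ((LinearMap.range (S i))ᗮ).prod ⊥
      else (⊥ : Submodule ℝ (Z (i + 1))).prod (LinearMap.ker (S (i + 1)))

/-- The operators `𝒟^j` of the BGG complex, realized on `Z^j × Z̃^j`:
`𝒟^j = P_{ran(S^j)ᗮ} D^j` for `j < J`, `𝒟^J = D̃^J (S^J)⁻¹ D^J`, and `𝒟^j = D̃^j`
for `j > J`. -/
noncomputable def BGGop (j : ℕ) : (Z j × Z' j) →ₗ[ℝ] (Z (j + 1) × Z' (j + 1)) :=
  if j < J then
    LinearMap.inl ℝ _ _ ∘ₗ projRanPerp Z Z' S j ∘ₗ D j ∘ₗ LinearMap.fst ℝ _ _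
  else if h : j = J then
    (by
      subst h
      exact LinearMap.inr ℝ (Z (j + 1)) (Z' (j + 1)) ∘ₗ D' j ∘ₗ Sinv ∘ₗ D j ∘ₗ
        LinearMap.fst ℝ (Z j) (Z' j))
  else
    LinearMap.inr ℝ _ _ ∘ₗ D' j ∘ₗ LinearMap.snd ℝ _ _

end BGG

theorem exists_map_starProjection_orthogonal_range_eq {𝕜 A B C D : Type*} [RCLike 𝕜]
    [NormedAddCommGroup B] [InnerProductSpace 𝕜 B] [AddCommGroup A] [Module 𝕜 A]
    [AddCommGroup C] [Module 𝕜 C] [AddCommGroup D] [Module 𝕜 D]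
    (d : B →ₗ[𝕜] C) (s : A →ₗ[𝕜] B) (s' : D →ₗ[𝕜] C) (d' : A →ₗ[𝕜] D)
    [(LinearMap.range s).HasOrthogonalProjection]
    (hs : ∀ v, d (s v) = -s' (d' v)) {x : B} (hx : d x = 0) :
    ∃ v, d ((LinearMap.range s)ᗮ.starProjection x) = s' (d' v) := by
  obtain ⟨v, hv⟩ := (LinearMap.range s).starProjection_apply_mem x
  refine ⟨v, ?_⟩
  rw [Submodule.starProjection_orthogonal_val, map_sub, hx, ← hv, hs, zero_sub, neg_neg]

section BGGop

variable (Z Z' : ℕ → Type*)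
variable [∀ j, NormedAddCommGroup (Z j)] [∀ j, InnerProductSpace ℝ (Z j)]
variable [∀ j, NormedAddCommGroup (Z' j)] [∀ j, InnerProductSpace ℝ (Z' j)]
  [∀ j, FiniteDimensional ℝ (Z' j)]
variable {D : ∀ j, Z j →ₗ[ℝ] Z (j + 1)} {D' : ∀ j, Z' j →ₗ[ℝ] Z' (j + 1)}
variable {S : ∀ j, Z' j →ₗ[ℝ] Z (j + 1)} {J : ℕ} {Sinv : Z (J + 1) →ₗ[ℝ] Z' J}

theorem BGGop_of_lt {j : ℕ} (hj : j < J) (w : Z j × Z' j) :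
    BGGop Z Z' D D' S J Sinv j w = ((LinearMap.range (S j))ᗮ.starProjection (D j w.1), 0) := by
  rw [BGGop, if_pos hj]
  rfl

theorem BGGop_self (w : Z J × Z' J) :
    BGGop Z Z' D D' S J Sinv J w = (0, D' J (Sinv (D J w.1))) := by
  rw [BGGop, if_neg (lt_irrefl J), dif_pos rfl]
  rfl

theorem BGGop_of_gt {j : ℕ} (hj : J < j) (w : Z j × Z' j) :
    BGGop Z Z' D D' S J Sinv j w = (0, D' j w.2) := by
  rw [BGGop, if_neg hj.not_gt, dif_neg hj.ne']
  rfl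

end BGGop

section BGG

variable (Z Z' : ℕ → Type*)
variable [∀ j, NormedAddCommGroup (Z j)] [∀ j, InnerProductSpace ℝ (Z j)]
  [∀ j, FiniteDimensional ℝ (Z j)]
variable [∀ j, NormedAddCommGroup (Z' j)] [∀ j, InnerProductSpace ℝ (Z' j)]
  [∀ j, FiniteDimensional ℝ (Z' j)]
variable (D : ∀ j, Z j →ₗ[ℝ] Z (j + 1)) (D' : ∀ j, Z' j →ₗ[ℝ] Z' (j + 1))
variable (S : ∀ j, Z' j →ₗ[ℝ] Z (j + 1)) (J : ℕ) (Sinv : Z (J + 1) →ₗ[ℝ] Z' J)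

theorem BGG_is_complex
    (hDD : ∀ j (u : Z j), D (j + 1) (D j u) = 0)
    (hD'D' : ∀ j (u : Z' j), D' (j + 1) (D' j u) = 0)
    (hanti : ∀ j (u : Z' j), D (j + 1) (S j u) = - S (j + 1) (D' j u))
    (hSinv₁ : ∀ u, Sinv (S J u) = u) :
    ∀ j, ∀ w ∈ BGGspace Z Z' S J j,
      BGGop Z Z' D D' S J Sinv (j + 1) (BGGop Z Z' D D' S J Sinv j w) = 0 := by
  intro j w _
  rcases lt_trichotomy j J with hj | rfl | hj
  · obtain ⟨v, hv⟩ := exists_map_starProjection_orthogonal_range_eq (D (j + 1)) (S j)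
      (S (j + 1)) (D' j) (hanti j) (hDD j w.1)
    rw [BGGop_of_lt Z Z' hj]
    rcases (Nat.succ_le_of_lt hj).eq_or_lt with rfl | hj'
    · simp only [BGGop_self, hv, hSinv₁, hD'D', Prod.mk_zero_zero]
    · simp only [BGGop_of_lt Z Z' hj', hv, Prod.mk_zero_zero,
        Submodule.starProjection_orthogonal_apply_eq_zero (LinearMap.mem_range_self _ _)]
  · simp [BGGop_self, BGGop_of_gt Z Z' (lt_add_one j), hD'D']
  · simp [BGGop_of_gt Z Z' hj, BGGop_of_gt Z Z' (hj.trans (lt_add_one j)), hD'D']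

end BGG
end

section
/- Let π^{i,j} : L²Λ^{i,j}(I) → S^p_r Λ^{i,j}(I), i,j ∈ {0,1}, be L²-bounded operators commuting with the 1D exterior derivative (d π^{0,j} = π^{1,j} d) and with S^{0,1} (S^{0,1} π^{0,1} = π^{1,0} S^{0,1}). Define the tensor-product operator π^{k,l}_{⊗n} := Σ over (i_1,…,i_n) ∈ X_k, (j_1,…,j_n) ∈ X_l of π^{i_1,j_1} ⊗ ⋯ ⊗ π^{i_n,j_n} (with π^{i,j} extended by zero on forms of other bidegree). Then π^{k,l}_{⊗n} commutes with the n-dimensional exterior derivative: d^k π^{k,l}_{⊗n} = π^{k+1,l}_{⊗n} d^k. -/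
open scoped TensorProduct

variable {V : Type*}

/-- An element of the tensor-product space `L²Λ^{k,l}_{⊗n}` is encoded by its components:
for each pair of characteristic (0-1) vectors `(s,t)` a coefficient in the `n`-fold
tensor power of the 1D coefficient space `V`. -/
def DoubleFormField (n : ℕ) (V : Type*) [AddCommGroup V] [Module ℝ V] :=
  (Fin n → Bool) → (Fin n → Bool) → (⨂[ℝ] _ : Fin n, V)

/-- The `n`-dimensional exterior derivative on rank-1 tensors:
`d^k(u_1 ⊗ ⋯ ⊗ u_n) = Σ_h (−1)^{|i|_{h−1}} u_1 ⊗ ⋯ ⊗ d u_h ⊗ ⋯ ⊗ u_n`, acting in the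
direction `h` for each `h` with `s h = 1` and moving the component from characteristic
vector `s − e_h` to `s`. -/
noncomputable def dOp (n : ℕ) [AddCommGroup V] [Module ℝ V] (d1 : V →ₗ[ℝ] V)
    (ω : DoubleFormField n V) : DoubleFormField n V := fun s t =>
  ∑ h : Fin n,
    if s h = true then
      ((-1 : ℝ) ^ (Finset.univ.filter fun h' => h' < h ∧ s h' = true).card) •
        PiTensorProduct.map
          (Function.update (fun _ : Fin n => (LinearMap.id : V →ₗ[ℝ] V)) h d1)
          (ω (Function.update s h false) t)
    else 0

/-- The tensor-product (quasi-)interpolation operator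
`π^{k,l}_{⊗n} = Σ π^{i_1,j_1} ⊗ ⋯ ⊗ π^{i_n,j_n}`: on the component with characteristic
vectors `(s,t)` it acts as the tensor product of the 1D operators `π^{s_h,t_h}` on the
coefficients. -/
noncomputable def piOp (n : ℕ) [AddCommGroup V] [Module ℝ V]
    (π : Bool → Bool → (V →ₗ[ℝ] V)) (ω : DoubleFormField n V) : DoubleFormField n V :=
  fun s t => PiTensorProduct.map (fun h => π (s h) (t h)) (ω s t)

/-
A single term of `d^k` is the tensor product of `d` in direction `h` with identities elsewhere.
It intertwines `π^{s - e_h, t}` and `π^{s,t}` factor by factor: in direction `h` this is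
`d π^{0,j} = π^{1,j} d`, in every other direction both sides are the same operator.
-/

theorem PiTensorProduct.map_comp_map_of_comp_eq {R ι : Type*} [CommSemiring R]
    {M N N' P : ι → Type*} [∀ i, AddCommMonoid (M i)] [∀ i, Module R (M i)]
    [∀ i, AddCommMonoid (N i)] [∀ i, Module R (N i)]
    [∀ i, AddCommMonoid (N' i)] [∀ i, Module R (N' i)]
    [∀ i, AddCommMonoid (P i)] [∀ i, Module R (P i)]
    {f : ∀ i, M i →ₗ[R] N i} {g : ∀ i, N i →ₗ[R] P i}
    {f' : ∀ i, M i →ₗ[R] N' i} {g' : ∀ i, N' i →ₗ[R] P i}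
    (h : ∀ i, g i ∘ₗ f i = g' i ∘ₗ f' i) :
    map g ∘ₗ map f = map g' ∘ₗ map f' := by
  rw [← map_comp, ← map_comp, funext h]

theorem update_id_comp_eq_comp_update_id [AddCommGroup V] [Module ℝ V] {n : ℕ}
    {d1 : V →ₗ[ℝ] V} {π : Bool → Bool → (V →ₗ[ℝ] V)}
    (hd : ∀ j : Bool, d1 ∘ₗ π false j = π true j ∘ₗ d1)
    {s : Fin n → Bool} {h : Fin n} (hs : s h = true) (t : Fin n → Bool) (i : Fin n) :
    Function.update (fun _ => LinearMap.id) h d1 i ∘ₗ π (Function.update s h false i) (t i) =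
      π (s i) (t i) ∘ₗ Function.update (fun _ => LinearMap.id) h d1 i := by
  rcases eq_or_ne i h with rfl | hi
  · simp [hs, hd]
  · simp [Function.update_of_ne hi]

theorem piOp_comm_dOp_general (n : ℕ) [NormedAddCommGroup V] [NormedSpace ℝ V]
    (d1 : V →ₗ[ℝ] V) (π : Bool → Bool → (V →ₗ[ℝ] V))
    (hd : ∀ j : Bool, d1 ∘ₗ π false j = π true j ∘ₗ d1) :
    ∀ (ω : DoubleFormField n V) (s t : Fin n → Bool),
      dOp n d1 (piOp n π ω) s t = piOp n π (dOp n d1 ω) s t := by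
  intro ω s t
  simp only [dOp, piOp, map_sum]
  refine Finset.sum_congr rfl fun h _ => ?_
  split_ifs with hs
  · rw [LinearMap.map_smul, ← LinearMap.comp_apply, ← LinearMap.comp_apply,
      PiTensorProduct.map_comp_map_of_comp_eq (update_id_comp_eq_comp_update_id hd hs t)]
  · rw [map_zero]

/-- if the 1D operators `π^{i,j}` (`i,j ∈ {0,1}`) are `L²`-bounded, commute
with the 1D exterior derivative (`d π^{0,j} = π^{1,j} d`) and with `S^{0,1}`
(`π^{0,1} = π^{1,0}` on coefficients), then the tensor-product operator `π^{k,l}_{⊗n}`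
commutes with the `n`-dimensional exterior derivative: `d^k π^{k,l}_{⊗n} = π^{k+1,l}_{⊗n} d^k`. -/
theorem piOp_comm_dOp (n : ℕ) [NormedAddCommGroup V] [NormedSpace ℝ V]
    (d1 : V →ₗ[ℝ] V) (π : Bool → Bool → (V →ₗ[ℝ] V))
    (hbdd : ∀ i j : Bool, ∃ C : ℝ, ∀ v : V, ‖π i j v‖ ≤ C * ‖v‖)
    (hd : ∀ j : Bool, d1 ∘ₗ π false j = π true j ∘ₗ d1)
    (hS : π false true = π true false) :
    ∀ (ω : DoubleFormField n V) (s t : Fin n → Bool),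
      dOp n d1 (piOp n π ω) s t = piOp n π (dOp n d1 ω) s t :=
  piOp_comm_dOp_general n d1 π hd
end

section
/- Under the same assumptions, the tensor-product quasi-interpolation operators commute with the BGG linking operators: π^{k+1,l−1}_{⊗n} S^{k,l} = S^{k,l} π^{k,l}_{⊗n} for all 0 ≤ k ≤ n−1 and 1 ≤ l ≤ n, where S^{k,l} = I ⊗ s^{k,l}. -/
open scoped TensorProduct

variable {V : Type*}

/-- The BGG linking operator `S^{k,l} = I ⊗ s^{k,l}` on tensor products of 1D double
forms: `s^{k,l}(ω_1 ⊗ ⋯ ⊗ ω_n) = Σ_h (−1)^{|i|_h+|j|_h} ω_1 ∧ ⋯ ∧ s^{i_h,j_h}ω_h ∧ ⋯ ∧ ω_n`,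
where `s^{0,1}` moves the factor `dx^h` from the second slot to the first (leaving the
coefficient unchanged) and `s^{i,j} = 0` for the other 1D bidegrees. -/
noncomputable def SOp (n : ℕ) [AddCommGroup V] [Module ℝ V]
    (ω : DoubleFormField n V) : DoubleFormField n V := fun s t =>
  ∑ h : Fin n,
    if s h = true ∧ t h = false then
      ((-1 : ℝ) ^ ((Finset.univ.filter fun h' => h' < h ∧ s h' = true).card
          + (Finset.univ.filter fun h' => h' < h ∧ t h' = true).card + 1)) •
        ω (Function.update s h false) (Function.update t h true)
    else 0

/-! On the component `(s, t)` both sides are sums over the positions `h` with `s h = 1`, `t h = 0`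
of the same signed coefficient `ω (s - e_h) (t + e_h)` under a tensor product of 1D interpolants.
The two tensor products differ only in the factor at `h`: `π^{1,0}` on the left, `π^{0,1}` on the
right, and these coincide by the 1D commutation `S^{0,1}π^{0,1} = π^{1,0}S^{0,1}`. -/

theorem apply_update_false_update_true {ι M : Type*} [DecidableEq ι] (π : Bool → Bool → M)
    (hS : π false true = π true false) {s t : ι → Bool} {h : ι} (hs : s h = true)
    (ht : t h = false) :
    (fun i => π (Function.update s h false i) (Function.update t h true i)) =
      fun i => π (s i) (t i) := by
  funext i
  rcases eq_or_ne i h with rfl | hi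
  · simp only [Function.update_self, hs, ht, hS]
  · simp only [Function.update_of_ne hi]

theorem piOp_comm_SOp_general (n : ℕ) [NormedAddCommGroup V] [NormedSpace ℝ V]
    (π : Bool → Bool → (V →ₗ[ℝ] V))
    (hS : π false true = π true false) :
    ∀ (ω : DoubleFormField n V) (s t : Fin n → Bool),
      piOp n π (SOp n ω) s t = SOp n (piOp n π ω) s t := by
  intro ω s t
  simp only [piOp, SOp, map_sum]
  refine Finset.sum_congr rfl fun h _ => ?_
  split_ifs with hst
  · rw [map_smul, apply_update_false_update_true π hS hst.1 hst.2]
  · exact map_zero _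

/-- under the 1D assumptions (in particular `S^{0,1}π^{0,1} = π^{1,0}S^{0,1}`,
i.e. `π^{0,1} = π^{1,0}` on coefficients), the tensor-product quasi-interpolation
operators commute with the BGG linking operators:
`π^{k+1,l−1}_{⊗n} S^{k,l} = S^{k,l} π^{k,l}_{⊗n}`. -/
theorem piOp_comm_SOp (n : ℕ) [NormedAddCommGroup V] [NormedSpace ℝ V]
    (d1 : V →ₗ[ℝ] V) (π : Bool → Bool → (V →ₗ[ℝ] V))
    (hbdd : ∀ i j : Bool, ∃ C : ℝ, ∀ v : V, ‖π i j v‖ ≤ C * ‖v‖)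
    (hd : ∀ j : Bool, d1 ∘ₗ π false j = π true j ∘ₗ d1)
    (hS : π false true = π true false) :
    ∀ (ω : DoubleFormField n V) (s t : Fin n → Bool),
      piOp n π (SOp n ω) s t = SOp n (piOp n π ω) s t :=
  piOp_comm_SOp_general n π hS
end
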